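/- Let d, N be natural numbers with d ≥ 1 and N ≥ 2, let α > 0, set r = α/2 and g_r(t) = (1−t)^{−r}. Let x_1,…,x_N ∈ S^d be pairwise distinct, let h ∈ ℝ^{d+1} satisfy ⟨x_1, h⟩ = 0, and define f(t) = E_α( (x_1 + t·h)/‖x_1 + t·h‖, x_2, …, x_N ) for t in a neighborhood of 0. Then f is twice differentiable at 0 and f''(0) = 2·∑_{j=2}^{N} [ g_r''(⟨x_1,x_j⟩)·⟨x_j,h⟩² − g_r'(⟨x_1,x_j⟩)·‖h‖²·⟨x_1,x_j⟩ ], where E_α here denotes the rescaled energy ∑_{i≠j} g_r(⟨x_i,x_j⟩) = 2^{α/2}·∑_{i≠j} ‖x_i − x_j‖^{−α}. -/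

import Mathlib

open scoped RealInnerProductSpace

noncomputable def swA (H t : ℝ) : ℝ := (1 + t ^ 2 * H) ^ (-(1/2) : ℝ)
noncomputable def swB (H t : ℝ) : ℝ :=
  (2 * t * H) * (-(1/2)) * (1 + t ^ 2 * H) ^ (-(1/2) - 1 : ℝ)
noncomputable def sphi (a b H t : ℝ) : ℝ := (a + t * b) * swA H t
noncomputable def sdphi (a b H t : ℝ) : ℝ := b * swA H t + (a + t * b) * swB H t
noncomputable def sdpsi (r a b H t : ℝ) : ℝ :=
  -(sdphi a b H t) * (-r) * (1 - sphi a b H t) ^ (-r - 1)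

lemma base_pos (H t : ℝ) (hH : 0 ≤ H) : 0 < 1 + t ^ 2 * H := by positivity

lemma hasDerivAt_base (H t : ℝ) :
    HasDerivAt (fun s : ℝ => 1 + s ^ 2 * H) (2 * t * H) t := by
  have := ((hasDerivAt_pow 2 t).mul_const H).const_add 1
  exact this.congr_deriv (by push_cast; ring)

lemma hasDerivAt_swA (H t : ℝ) (hH : 0 ≤ H) : HasDerivAt (swA H) (swB H t) t := by
  have := (hasDerivAt_base H t).rpow_const (p := (-(1/2) : ℝ))
    (Or.inl (base_pos H t hH).ne')
  exact this

lemma swA_zero (H : ℝ) : swA H 0 = 1 := by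
  simp [swA]

lemma swB_zero (H : ℝ) : swB H 0 = 0 := by
  simp [swB]

lemma hasDerivAt_sphi (a b H t : ℝ) (hH : 0 ≤ H) :
    HasDerivAt (fun s => sphi a b H s) (sdphi a b H t) t := by
  have hlin : HasDerivAt (fun s : ℝ => a + s * b) (1 * b) t :=
    ((hasDerivAt_id t).mul_const b).const_add a
  have := hlin.mul (hasDerivAt_swA H t hH)
  simp only [sphi, sdphi]
  exact this.congr_deriv (by ring)

lemma sphi_zero (a b H : ℝ) : sphi a b H 0 = a := by
  simp [sphi, swA_zero]

lemma sdphi_zero (a b H : ℝ) : sdphi a b H 0 = b := by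
  simp [sdphi, swA_zero, swB_zero]

lemma hasDerivAt_psi (r a b H t : ℝ) (hH : 0 ≤ H) (hpos : 0 < 1 - sphi a b H t) :
    HasDerivAt (fun s => (1 - sphi a b H s) ^ (-r)) (sdpsi r a b H t) t := by
  have := ((hasDerivAt_sphi a b H t hH).const_sub 1).rpow_const (p := -r)
    (Or.inl hpos.ne')
  exact this

lemma hasDerivAt_swB (H : ℝ) (hH : 0 ≤ H) : HasDerivAt (swB H) (-H) 0 := by
  have h1 : HasDerivAt (fun t : ℝ => 2 * t * H * (-(1/2))) (2 * 1 * H * (-(1/2))) 0 :=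
    (((hasDerivAt_id 0).const_mul 2).mul_const H).mul_const (-(1/2))
  have h2 := (hasDerivAt_base H 0).rpow_const (p := (-(1/2) - 1 : ℝ))
    (Or.inl (base_pos H 0 hH).ne')
  have h3 := h1.mul h2
  have hfun : swB H = fun t : ℝ =>
      2 * t * H * (-(1/2)) * ((1 + t ^ 2 * H) ^ (-(1/2) - 1 : ℝ)) := by
    funext t; rfl
  rw [hfun]
  refine h3.congr_deriv ?_
  norm_num
  ring

lemma hasDerivAt_sdpsi (r a b H : ℝ) (hH : 0 ≤ H) (ha : 0 < 1 - a) :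
    HasDerivAt (fun t => sdpsi r a b H t)
      (r * (r + 1) * (1 - a) ^ (-r - 2) * b ^ 2 - r * (1 - a) ^ (-r - 1) * H * a) 0 := by
  have hlin : HasDerivAt (fun s : ℝ => a + s * b) (1 * b) 0 :=
    ((hasDerivAt_id 0).mul_const b).const_add a
  have hdphi : HasDerivAt (fun t => sdphi a b H t)
      (b * swB H 0 + (1 * b * swB H 0 + (a + 0 * b) * (-H))) 0 := by
    have h1 := (hasDerivAt_swA H 0 hH).const_mul b
    have h2 := hlin.mul (hasDerivAt_swB H hH)
    exact h1.add h2
  have hphi0 := hasDerivAt_sphi a b H 0 hH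
  have hpos0 : (0:ℝ) < 1 - sphi a b H 0 := by rw [sphi_zero]; exact ha
  have hG : HasDerivAt (fun t => -(sdphi a b H t) * (-r))
      (-(b * swB H 0 + (1 * b * swB H 0 + (a + 0 * b) * (-H))) * (-r)) 0 :=
    hdphi.neg.mul_const (-r)
  have hK := (hphi0.const_sub 1).rpow_const (p := -r - 1) (Or.inl hpos0.ne')
  have h3 := hG.mul hK
  have hfun : (fun t => sdpsi r a b H t) =
      fun t => -(sdphi a b H t) * (-r) * (1 - sphi a b H t) ^ (-r - 1) := rfl
  rw [hfun]
  refine h3.congr_deriv ?_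
  rw [sphi_zero, sdphi_zero, swB_zero]
  rw [show (-r - 1 - 1 : ℝ) = -r - 2 by ring]
  ring


/-- Second variation of the rescaled energy `∑_{i≠j} g_r(⟨x_i,x_j⟩)`, `g_r(t) = (1−t)^{−r}`,
`r = α/2`, when only the point `x₁` is perturbed along a tangent vector `h ⟂ x₁`:
with `f(t) = E_α((x₁+t·h)/‖x₁+t·h‖, x₂, …, x_N)`, the function `f` is twice differentiable
at `0` and
`f''(0) = 2·∑_{j=2}^{N} [g_r''(⟨x₁,x_j⟩)·⟨x_j,h⟩² − g_r'(⟨x₁,x_j⟩)·‖h‖²·⟨x₁,x_j⟩]`. -/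
theorem second_derivative_single_point_variation (d N : ℕ) (hd : 1 ≤ d) (hN : 2 ≤ N)
    (α : ℝ) (hα : 0 < α)
    (x : Fin N → EuclideanSpace ℝ (Fin (d + 1))) (hx : ∀ i, ‖x i‖ = 1)
    (hinj : Function.Injective x)
    (h : EuclideanSpace ℝ (Fin (d + 1))) (hh : ⟪x ⟨0, by omega⟩, h⟫ = 0)
    (f : ℝ → ℝ)
    (hf : f = fun t =>
      ∑ i, ∑ j ∈ Finset.univ.filter (· ≠ i),
        (1 - ⟪Function.update x ⟨0, by omega⟩
                ((‖x ⟨0, by omega⟩ + t • h‖)⁻¹ • (x ⟨0, by omega⟩ + t • h)) i,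
              Function.update x ⟨0, by omega⟩
                ((‖x ⟨0, by omega⟩ + t • h‖)⁻¹ • (x ⟨0, by omega⟩ + t • h)) j⟫) ^ (-(α / 2))) :
    (∀ᶠ t in nhds (0 : ℝ), DifferentiableAt ℝ f t) ∧
    HasDerivAt (deriv f)
      (2 * ∑ j ∈ Finset.univ.filter (· ≠ (⟨0, by omega⟩ : Fin N)),
        ((α / 2) * (α / 2 + 1) * (1 - ⟪x ⟨0, by omega⟩, x j⟫) ^ (-(α / 2) - 2) * ⟪x j, h⟫ ^ 2
          - (α / 2) * (1 - ⟪x ⟨0, by omega⟩, x j⟫) ^ (-(α / 2) - 1) * ‖h‖ ^ 2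
              * ⟪x ⟨0, by omega⟩, x j⟫)) 0 := by
  have hN0 : 0 < N := by omega
  set e : Fin N := ⟨0, by omega⟩ with he
  set a : Fin N → ℝ := fun j => ⟪x e, x j⟫ with ha
  set b : Fin N → ℝ := fun j => ⟪x j, h⟫ with hb
  set H : ℝ := ‖h‖ ^ 2 with hH
  have hHnn : 0 ≤ H := by positivity
  -- norm computation
  have hnormsq : ∀ t : ℝ, ‖x e + t • h‖ ^ 2 = 1 + t ^ 2 * H := by
    intro t
    rw [norm_add_sq_real, real_inner_smul_right, hh, hx e, norm_smul]
    simp [mul_pow, sq_abs, hH]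
  have hinv : ∀ t : ℝ, (‖x e + t • h‖)⁻¹ = swA H t := by
    intro t
    have h1 : ‖x e + t • h‖ = Real.sqrt (1 + t ^ 2 * H) := by
      rw [← hnormsq t]; exact (Real.sqrt_sq (norm_nonneg _)).symm
    rw [h1, Real.sqrt_eq_rpow, swA, Real.rpow_neg (base_pos H t hHnn).le]
  have hip : ∀ (t : ℝ) (j : Fin N),
      ⟪(‖x e + t • h‖)⁻¹ • (x e + t • h), x j⟫ = sphi (a j) (b j) H t := by
    intro t j
    rw [real_inner_smul_left, inner_add_left, real_inner_smul_left, hinv,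
      real_inner_comm (x j) h]
    simp only [sphi, ha, hb]
    ring
  set S : ℝ → ℝ := fun t => ∑ j ∈ Finset.univ.erase e,
      (1 - sphi (a j) (b j) H t) ^ (-(α / 2)) with hS
  set C : ℝ := ∑ i ∈ Finset.univ.erase e, ∑ j ∈ (Finset.univ.erase i).erase e,
      (1 - ⟪x i, x j⟫) ^ (-(α / 2)) with hC
  have hfe : f = fun t => 2 * S t + C := by
    funext t
    rw [hf]
    set v : EuclideanSpace ℝ (Fin (d + 1)) := (‖x e + t • h‖)⁻¹ • (x e + t • h) with hv
    have hue : Function.update x e v e = v := Function.update_self e v x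
    have huj : ∀ j : Fin N, j ≠ e → Function.update x e v j = x j :=
      fun j hj => Function.update_of_ne hj v x
    simp only [ne_eq, Finset.filter_ne']
    rw [← Finset.add_sum_erase Finset.univ _ (Finset.mem_univ e)]
    have h1 : ∑ j ∈ Finset.univ.erase e,
        (1 - ⟪Function.update x e v e, Function.update x e v j⟫) ^ (-(α / 2)) = S t := by
      refine Finset.sum_congr rfl fun j hj => ?_
      rw [hue, huj j (Finset.ne_of_mem_erase hj), hip]
    have h2 : ∀ i ∈ Finset.univ.erase e,
        (∑ j ∈ Finset.univ.erase i,
          (1 - ⟪Function.update x e v i, Function.update x e v j⟫) ^ (-(α / 2)))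
        = (1 - sphi (a i) (b i) H t) ^ (-(α / 2)) +
          ∑ j ∈ (Finset.univ.erase i).erase e, (1 - ⟪x i, x j⟫) ^ (-(α / 2)) := by
      intro i hi
      have hine : i ≠ e := Finset.ne_of_mem_erase hi
      rw [← Finset.add_sum_erase _ _
        (Finset.mem_erase.mpr ⟨hine.symm, Finset.mem_univ e⟩)]
      congr 1
      · rw [huj i hine, hue, real_inner_comm, hip]
      · refine Finset.sum_congr rfl fun j hj => ?_
        rw [huj i hine, huj j (Finset.ne_of_mem_erase hj)]
    rw [h1, Finset.sum_congr rfl h2, Finset.sum_add_distrib]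
    change S t + (S t + C) = 2 * S t + C
    ring
  -- positivity at 0
  have hapos : ∀ j ∈ Finset.univ.erase e, 0 < 1 - a j := by
    intro j hj
    have hne : x e ≠ x j := by
      intro hcon
      exact Finset.ne_of_mem_erase hj (hinj hcon).symm
    have := (inner_lt_one_iff_real_of_norm_eq_one (hx e) (hx j)).mpr hne
    simp only [ha]
    linarith
  -- eventual positivity
  have hev : ∀ᶠ t in nhds (0:ℝ), ∀ j ∈ Finset.univ.erase e,
      0 < 1 - sphi (a j) (b j) H t := by
    rw [Filter.eventually_all_finset]
    intro j hj
    have hc : ContinuousAt (fun t => 1 - sphi (a j) (b j) H t) 0 :=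
      (continuousAt_const.sub (hasDerivAt_sphi (a j) (b j) H 0 hHnn).continuousAt)
    have h0 : (0:ℝ) < 1 - sphi (a j) (b j) H 0 := by
      rw [sphi_zero]; exact hapos j hj
    have := hc.preimage_mem_nhds (Ioi_mem_nhds h0)
    filter_upwards [this] with t ht
    exact ht
  set D : ℝ → ℝ := fun t => 2 * ∑ j ∈ Finset.univ.erase e,
      sdpsi (α / 2) (a j) (b j) H t with hD
  have hevD : ∀ᶠ t in nhds (0:ℝ), HasDerivAt f (D t) t := by
    filter_upwards [hev] with t ht
    rw [hfe]
    exact ((HasDerivAt.fun_sum fun j hj =>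
      hasDerivAt_psi (α / 2) (a j) (b j) H t hHnn (ht j hj)).const_mul 2).add_const C
  refine ⟨hevD.mono fun t ht => ht.differentiableAt, ?_⟩
  have hderiv_eq : deriv f =ᶠ[nhds (0:ℝ)] D := hevD.mono fun t ht => ht.deriv
  have hDD : HasDerivAt D (2 * ∑ j ∈ Finset.univ.erase e,
      ((α / 2) * (α / 2 + 1) * (1 - a j) ^ (-(α / 2) - 2) * (b j) ^ 2
        - (α / 2) * (1 - a j) ^ (-(α / 2) - 1) * H * a j)) 0 :=
    (HasDerivAt.fun_sum fun j hj =>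
      hasDerivAt_sdpsi (α / 2) (a j) (b j) H hHnn (hapos j hj)).const_mul 2
  have := hDD.congr_of_eventuallyEq hderiv_eq
  simp only [ne_eq, Finset.filter_ne']
  convert this using 3
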